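/- arXiv:1510.05485 — 2 statements merged into one kernel-verified Lean document; each statement's English description precedes it below -/
import Mathlib

section
/- Let V = {1,2,3,4} and let H consist of all subsets of V with at most 2 elements together with {1,2,3} and {1,2,4}. Then (V, H) is boolean representable, but its lattice of flats is not (upper) semimodular: the flats {2} and {3} each cover the bottom flat ∅, their join in Fl(V,H) is V, yet {2} is not covered by V (since {2} ⊂ {1,2} ⊂ V in Fl(V,H)). -/
universe u v

/-- `F ⊆ V` is a flat of the simplicial complex `(V, H)`: for every `I ∈ H` with
`I ⊆ F` and every `p ∈ V \ F`, `I ∪ {p} ∈ H`. -/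
def IsCFlat {α : Type u} (V : Set α) (H : Set (Set α)) (F : Set α) : Prop :=
  F ⊆ V ∧ ∀ I ∈ H, I ⊆ F → ∀ p ∈ V \ F, insert p I ∈ H

/-- `(V, H)` is a finite simplicial complex: `V` is finite and nonempty, and
`H ⊆ 2^V` is nonempty and closed under taking subsets. -/
def IsCpx {α : Type u} (V : Set α) (H : Set (Set α)) : Prop :=
  V.Finite ∧ V.Nonempty ∧ H.Nonempty ∧ (∀ X ∈ H, X ⊆ V) ∧ ∀ X ∈ H, ∀ Y ⊆ X, Y ∈ H

/-- `X` is a transversal of the successive differences for some chain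
`F 0 ⊂ F 1 ⊂ … ⊂ F k` of flats of `(V, H)`: `X` admits an enumeration
`x 0, …, x (k-1)` with `x i ∈ F (i+1) \ F i`. -/
def TransvSD {α : Type u} (V : Set α) (H : Set (Set α)) (X : Set α) : Prop :=
  ∃ (k : ℕ) (F : Fin (k + 1) → Set α) (x : Fin k → α),
    (∀ i, IsCFlat V H (F i)) ∧ StrictMono F ∧
    Function.Injective x ∧ X = Set.range x ∧
    ∀ i : Fin k, x i ∈ F i.succ \ F i.castSucc

/-- `(V, H)` is boolean representable: every `X ∈ H` is a transversal of the
successive differences for some chain of flats of `(V, H)`. -/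
def BoolRep {α : Type u} (V : Set α) (H : Set (Set α)) : Prop :=
  ∀ X ∈ H, TransvSD V H X

/-!
Sets with at most one point are flats, and so is `{0, 1}`: adding a third point to it gives one
of the two triangles. Each face is therefore a transversal along `∅ ⊂ {a} ⊂ V` or
`∅ ⊂ {0} ⊂ {0, 1} ⊂ V`. On the other hand, a flat containing `1` and `2` contains `3`, as
`{1, 2, 3}` is not a face, and then `0`, as `{0, 2, 3}` is not a face; so the join of `{1}` and
`{2}` is `V`, although `{1} ⊂ {0, 1} ⊂ V`.
-/

open Set

section Flats

variable {α : Type*} {V F I : Set α} {H : Set (Set α)}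

theorem isCFlat_self : IsCFlat V H V :=
  ⟨subset_rfl, fun _ _ _ _ hp => absurd hp.1 hp.2⟩

theorem IsCFlat.mem_of_insert_notMem (hF : IsCFlat V H F) (hI : I ∈ H) (hIF : I ⊆ F) {p : α}
    (hp : p ∈ V) (hpI : insert p I ∉ H) : p ∈ F := by
  by_contra hpF
  exact hpI (hF.2 I hI hIF p ⟨hp, hpF⟩)

theorem isCFlat_of_ncard_le [Finite α] {r : ℕ} (hH : ∀ X ⊆ V, X.ncard ≤ r + 1 → X ∈ H)
    (hFV : F ⊆ V) (hF : F.ncard ≤ r) : IsCFlat V H F := by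
  refine ⟨hFV, fun I _ hIF p hp => hH _ (insert_subset hp.1 (hIF.trans hFV)) ?_⟩
  calc (insert p I).ncard ≤ I.ncard + 1 := ncard_insert_le p I
    _ ≤ r + 1 := by have := ncard_le_ncard hIF; omega

/-- Along a monotone chain of flats, strict monotonicity and injectivity of the enumeration come
for free from `x i ∈ F (i + 1) \ F i`. -/
theorem transvSD_range_of_monotone {k : ℕ} {F : Fin (k + 1) → Set α} {x : Fin k → α}
    (hF : ∀ i, IsCFlat V H (F i)) (hmono : Monotone F)
    (hx : ∀ i, x i ∈ F i.succ \ F i.castSucc) : TransvSD V H (Set.range x) := by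
  have hnotMem : ∀ i j, i < j → x j ∉ F i.succ := fun i j hij hj =>
    (hx j).2 (hmono (Fin.succ_le_castSucc_iff.2 hij) hj)
  refine ⟨k, F, x, hF, Fin.strictMono_iff_lt_succ.2 fun i => ?_, fun i j hij => ?_, rfl, hx⟩
  · exact (hmono (Fin.castSucc_le_succ i)).ssubset_of_mem_notMem (hx i).1 (hx i).2
  · by_contra hne
    rcases lt_or_gt_of_ne hne with hlt | hlt
    · exact hnotMem i j hlt (hij ▸ (hx i).1)
    · exact hnotMem j i hlt (hij ▸ (hx j).1)

end Flats

def exampleCpx : Set (Set (Fin 4)) := {X | X.ncard ≤ 2} ∪ {{0, 1, 2}, {0, 1, 3}}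

namespace exampleCpx

theorem mem_iff {X : Set (Fin 4)} :
    X ∈ exampleCpx ↔ X.ncard ≤ 2 ∨ X = {0, 1, 2} ∨ X = {0, 1, 3} :=
  Iff.rfl

theorem isCFlat_of_ncard_le_one {F : Set (Fin 4)} (hF : F.ncard ≤ 1) :
    IsCFlat univ exampleCpx F :=
  isCFlat_of_ncard_le (fun _ _ hX => Or.inl hX) (subset_univ F) hF

theorem isCFlat_zero_one : IsCFlat univ exampleCpx {0, 1} := by
  refine ⟨subset_univ _, fun I _ hIF p hp => ?_⟩
  obtain rfl | hlt := hIF.eq_or_ssubset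
  · obtain rfl | rfl : p = 2 ∨ p = 3 := by revert hp; fin_cases p <;> simp
    · exact mem_iff.2 (Or.inr (Or.inl (by rw [insert_comm 2 0, pair_comm 2 1])))
    · exact mem_iff.2 (Or.inr (Or.inr (by rw [insert_comm 3 0, pair_comm 3 1])))
  · have hI := ncard_lt_ncard hlt
    rw [ncard_pair (by decide)] at hI
    exact Or.inl ((ncard_insert_le p I).trans (by omega))

theorem notMem_of_ncard_eq_three {X : Set (Fin 4)} (hX3 : X.ncard = 3) (h : 0 ∉ X ∨ 1 ∉ X) :
    X ∉ exampleCpx := by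
  rintro (hX | rfl | rfl)
  · exact absurd hX (by simp [hX3])
  all_goals simp at h

theorem eq_univ_of_isCFlat {F : Set (Fin 4)} (hF : IsCFlat univ exampleCpx F) (h1 : 1 ∈ F)
    (h2 : 2 ∈ F) : F = univ := by
  have hpair {a b : Fin 4} (hab : a ≠ b) : ({a, b} : Set (Fin 4)) ∈ exampleCpx :=
    Or.inl (ncard_pair hab).le
  have h3 : 3 ∈ F := hF.mem_of_insert_notMem (hpair (by decide)) (pair_subset h1 h2) (mem_univ 3)
    (notMem_of_ncard_eq_three (ncard_eq_three.2 ⟨3, 1, 2, by decide, by decide, by decide, rfl⟩)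
      (Or.inl (by simp)))
  have h0 : 0 ∈ F := hF.mem_of_insert_notMem (hpair (by decide)) (pair_subset h2 h3) (mem_univ 0)
    (notMem_of_ncard_eq_three (ncard_eq_three.2 ⟨0, 2, 3, by decide, by decide, by decide, rfl⟩)
      (Or.inr (by simp)))
  ext x
  fin_cases x <;> simpa

theorem transvSD_of_ncard_le_two {X : Set (Fin 4)} (hX : X.ncard ≤ 2) :
    TransvSD univ exampleCpx X := by
  obtain h | h | h : X.ncard = 0 ∨ X.ncard = 1 ∨ X.ncard = 2 := by omega
  · obtain rfl := (ncard_eq_zero (s := X)).1 h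
    have := transvSD_range_of_monotone (V := univ) (H := exampleCpx) (F := ![univ])
      (x := ![]) (fun i => by fin_cases i; exact isCFlat_self)
      (Fin.monotone_iff_le_succ.2 finZeroElim) finZeroElim
    rwa [Matrix.range_empty] at this
  · obtain ⟨a, rfl⟩ := ncard_eq_one.1 h
    have hF : ∀ i, IsCFlat univ exampleCpx (![∅, univ] i) := by
      intro i; fin_cases i
      · exact isCFlat_of_ncard_le_one (by simp)
      · exact isCFlat_self
    have := transvSD_range_of_monotone hF
      (Fin.monotone_iff_le_succ.2 fun i => by fin_cases i; simp)
      (x := ![a]) (fun i => by fin_cases i; simp)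
    simpa only [Matrix.range_cons, Matrix.range_empty, union_empty, singleton_union] using this
  · obtain ⟨a, b, hab, rfl⟩ := ncard_eq_two.1 h
    have hF : ∀ i, IsCFlat univ exampleCpx (![∅, {a}, univ] i) := by
      intro i; fin_cases i
      · exact isCFlat_of_ncard_le_one (by simp)
      · exact isCFlat_of_ncard_le_one (by simp)
      · exact isCFlat_self
    have := transvSD_range_of_monotone hF
      (Fin.monotone_iff_le_succ.2 fun i => by fin_cases i <;> simp)
      (x := ![a, b]) (fun i => by fin_cases i <;> simp [hab.symm])
    simpa only [Matrix.range_cons, Matrix.range_empty, union_empty, singleton_union] using this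

theorem transvSD_triple {c : Fin 4} (hc0 : c ≠ 0) (hc1 : c ≠ 1) :
    TransvSD univ exampleCpx {0, 1, c} := by
  have hF : ∀ i, IsCFlat univ exampleCpx (![∅, {0}, {0, 1}, univ] i) := by
    intro i; fin_cases i
    · exact isCFlat_of_ncard_le_one (by simp)
    · exact isCFlat_of_ncard_le_one (by simp)
    · exact isCFlat_zero_one
    · exact isCFlat_self
  have := transvSD_range_of_monotone hF
    (Fin.monotone_iff_le_succ.2 fun i => by fin_cases i <;> simp)
    (x := ![0, 1, c]) (fun i => by fin_cases i <;> simp [hc0, hc1])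
  simpa only [Matrix.range_cons, Matrix.range_empty, union_empty, singleton_union] using this

theorem boolRep : BoolRep univ exampleCpx := by
  rintro X (hX | rfl | rfl)
  · exact transvSD_of_ncard_le_two hX
  · exact transvSD_triple (by decide) (by decide)
  · exact transvSD_triple (by decide) (by decide)

end exampleCpx

open exampleCpx in
/-- For `V = {1,2,3,4}` (modeled as `Fin 4`, with `i : Fin 4` standing for `i+1`)
and `H = P_{≤2}(V) ∪ {{1,2,3}, {1,2,4}}`: `(V, H)` is boolean representable, but
its lattice of flats is not upper semimodular: the flats `{2}` and `{3}` both
cover the bottom flat `∅`, their join in `Fl(V,H)` is `V`, yet `{2}` is not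
covered by `V` since `{2} ⊂ {1,2} ⊂ V` with `{1,2}` a flat. -/
theorem stmt8 (V : Set (Fin 4)) (hV : V = Set.univ)
    (H : Set (Set (Fin 4)))
    (hH : H = {X : Set (Fin 4) | X.ncard ≤ 2} ∪ {{0, 1, 2}, {0, 1, 3}}) :
    BoolRep V H ∧
    -- `∅` is the bottom flat
    (IsCFlat V H ∅) ∧
    -- `{2}` and `{3}` are flats covering `∅`
    (IsCFlat V H {1} ∧ ∀ G, IsCFlat V H G → ∅ ⊂ G → G ⊂ {1} → False) ∧
    (IsCFlat V H {2} ∧ ∀ G, IsCFlat V H G → ∅ ⊂ G → G ⊂ {2} → False) ∧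
    -- the join of `{2}` and `{3}` in the lattice of flats is `V`
    (⋂₀ {F | IsCFlat V H F ∧ ({1} : Set (Fin 4)) ∪ {2} ⊆ F} = V) ∧
    -- but `{2}` is not covered by `V`: the flat `{1,2}` lies strictly between
    (IsCFlat V H {0, 1} ∧ ({1} : Set (Fin 4)) ⊂ {0, 1} ∧ ({0, 1} : Set (Fin 4)) ⊂ V) := by
  subst hV
  obtain rfl : H = exampleCpx := hH
  have hcover (a : Fin 4) (G : Set (Fin 4)) (hG : ∅ ⊂ G) (hGa : G ⊂ {a}) : False :=
    hG.ne' (ssubset_singleton_iff.1 hGa)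
  refine ⟨boolRep, isCFlat_of_ncard_le_one (by simp),
    ⟨isCFlat_of_ncard_le_one (by simp), fun G _ => hcover 1 G⟩,
    ⟨isCFlat_of_ncard_le_one (by simp), fun G _ => hcover 2 G⟩,
    sInter_eq_univ.2 fun F ⟨hF, h12⟩ => eq_univ_of_isCFlat hF (h12 (by simp)) (h12 (by simp)),
    isCFlat_zero_one, ?_, ?_⟩
  · exact (singleton_subset_iff.2 (by simp)).ssubset_of_mem_notMem (a := 0) (by simp) (by simp)
  · exact (subset_univ _).ssubset_of_mem_notMem (mem_univ 2) (by simp)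
end

section
/- Let L be a finite atomistic lattice. Then L is isomorphic to the lattice of flats of some boolean representable finite simplicial complex if and only if L is isomorphic to the lattice of flats of the simplicial complex 𝒯_L = (At(L), T_L). -/
/-!
Let `φ : L ≃o Fl(V, H)` with `(V, H)` boolean representable, and send each point `v` to the
element `cl v` of `L` corresponding to its closure. Faces are exactly the transversals of chains of
flats, so a set of points is a face iff `cl` is injective on it and its image is a transversal of a
chain in `L`. Hence, whenever `S ⊆ L` is closed under extending such transversals by closures of
points, the points with `cl v ∈ S ∪ {⊥}` form a flat, i.e. they are the points below some `x₀`.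
For `S = {cl v}` this forces `cl v` to be `⊥` or an atom (as `L` is atomistic); for a flat `S` of
`𝒯_L` it then gives `S = x₀ξ`, so `x ↦ xξ` is an isomorphism from `L` onto the flats of `𝒯_L`.
Conversely, `𝒯_L` is boolean representable: its faces are transversals of chains of the flats `xξ`.
-/

universe u v

/-- `xξ` : the set of atoms of `L` lying below `x`. -/
def latxi (L : Type u) [Lattice L] [OrderBot L] (x : L) : Set L :=
  {a | IsAtom a ∧ a ≤ x}

/-- `T_L` : the set of transversals of chains in `L`, i.e. sets of atoms `A`
admitting an enumeration `e 0, …, e (m-1)` and a chain `c 0 < … < c m` in `L`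
with `e i ∈ (c (i+1))ξ \ (c i)ξ`. -/
def TLat (L : Type u) [Lattice L] [OrderBot L] : Set (Set L) :=
  {A | ∃ (m : ℕ) (c : Fin (m + 1) → L) (e : Fin m → L), StrictMono c ∧
      Function.Injective e ∧ A = Set.range e ∧
      ∀ i : Fin m, e i ∈ latxi L (c i.succ) \ latxi L (c i.castSucc)}

/-- A lattice is atomistic if every element is a join of atoms. -/
def AtomisticLat (L : Type u) [Lattice L] [OrderBot L] : Prop :=
  ∀ x : L, ∃ s : Finset L, (∀ a ∈ s, IsAtom a) ∧ x = s.sup id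

/-- `A` is a transversal of the successive differences of a chain in `L` with top `x` (as in `T_L`,
but without the condition that `A` consists of atoms), grown at the top one element at a time. -/
inductive IsChainTransversal {L : Type*} [Preorder L] : Set L → L → Prop
  | empty (x : L) : IsChainTransversal ∅ x
  | insert {A : Set L} {x y b : L} : IsChainTransversal A x → x ≤ y → b ≤ y → ¬b ≤ x →
      IsChainTransversal (insert b A) y

namespace IsChainTransversal

variable {L : Type*}

section Preorder

variable [Preorder L] {A B : Set L} {a x y : L}

theorem le (h : IsChainTransversal A x) (ha : a ∈ A) : a ≤ x := by
  induction h with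
  | empty => exact absurd ha (Set.notMem_empty a)
  | insert _ hxy hby _ ih =>
    rcases ha with rfl | ha
    · exact hby
    · exact (ih ha).trans hxy

theorem mono_right (h : IsChainTransversal A x) (hxy : x ≤ y) : IsChainTransversal A y := by
  cases h with
  | empty => exact .empty y
  | insert hA hx hb hbx => exact hA.insert (hx.trans hxy) (hb.trans hxy) hbx

theorem subset (h : IsChainTransversal A x) (hBA : B ⊆ A) : IsChainTransversal B x := by
  induction h generalizing B with
  | empty => exact Set.subset_empty_iff.1 hBA ▸ .empty _
  | @insert A x y b hA hxy hby hbx ih =>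
    by_cases hb : b ∈ B
    · rw [← Set.insert_eq_of_mem hb, ← Set.insert_sdiff_singleton]
      exact (ih fun z hz => (hBA hz.1).resolve_left hz.2).insert hxy hby hbx
    · exact (ih fun z hz => (hBA hz).resolve_left (ne_of_mem_of_not_mem hz hb)).mono_right hxy

end Preorder

theorem ne_bot [Preorder L] [OrderBot L] (h : IsChainTransversal A x) {a : L} (ha : a ∈ A) :
    a ≠ ⊥ := by
  induction h with
  | empty => exact absurd ha (Set.notMem_empty a)
  | insert _ _ _ hbx ih =>
    rcases ha with rfl | ha
    · exact fun hb => hbx (hb ▸ bot_le)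
    · exact ih ha

theorem inf_right [SemilatticeInf L] {A : Set L} {x y : L} (h : IsChainTransversal A y)
    (hA : ∀ a ∈ A, a ≤ x) : IsChainTransversal A (y ⊓ x) := by
  induction h with
  | empty => exact .empty _
  | insert _ hxy hby hbx ih =>
    exact (ih fun a ha => hA a (Or.inr ha)).insert (inf_le_inf_right x hxy)
      (le_inf hby (hA _ (Or.inl rfl))) fun h => hbx (h.trans inf_le_left)

end IsChainTransversal

section FinChain

variable {L : Type*} [Preorder L] {m : ℕ} {c : Fin (m + 1) → L} {e : Fin m → L}

theorem strictMono_of_transversal (hc : Monotone c)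
    (he : ∀ i, e i ≤ c i.succ ∧ ¬e i ≤ c i.castSucc) : StrictMono c :=
  Fin.strictMono_iff_lt_succ.2 fun i =>
    lt_of_le_not_ge (hc i.castSucc_le_succ) fun h => (he i).2 ((he i).1.trans h)

theorem injective_of_transversal (hc : Monotone c)
    (he : ∀ i, e i ≤ c i.succ ∧ ¬e i ≤ c i.castSucc) : Function.Injective e := by
  have hne : ∀ i j, i < j → e i ≠ e j := fun i j hij hij' =>
    (he j).2 (hij' ▸ (he i).1.trans (hc (Fin.succ_le_castSucc_iff.2 hij)))
  intro i j hij
  by_contra hne'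
  rcases lt_or_gt_of_ne hne' with h | h
  exacts [hne i j h hij, hne j i h hij.symm]

theorem isChainTransversal_range : ∀ {m : ℕ} {c : Fin (m + 1) → L} {e : Fin m → L},
    Monotone c → (∀ i, e i ≤ c i.succ ∧ ¬e i ≤ c i.castSucc) →
    IsChainTransversal (Set.range e) (c (Fin.last m))
  | 0, _, e, _, _ => Set.range_eq_empty e ▸ .empty _
  | m + 1, c, e, hc, he => by
    rw [← Fin.snoc_init_self e, Fin.range_snoc]
    have hinit : IsChainTransversal (Set.range (Fin.init e)) (c (Fin.last m).castSucc) :=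
      isChainTransversal_range (c := Fin.init c) (hc.comp Fin.strictMono_castSucc.monotone)
        fun i => by simpa [Fin.init, ← Fin.succ_castSucc] using he i.castSucc
    exact hinit.insert (hc (Fin.le_last _)) (Fin.succ_last m ▸ (he (Fin.last m)).1)
      (he (Fin.last m)).2

theorem IsChainTransversal.exists_fin {A : Set L} {x : L} (h : IsChainTransversal A x) :
    ∃ (m : ℕ) (c : Fin (m + 1) → L) (e : Fin m → L), Monotone c ∧ c (Fin.last m) = x ∧
      A = Set.range e ∧ ∀ i, e i ≤ c i.succ ∧ ¬e i ≤ c i.castSucc := by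
  induction h with
  | empty x => exact ⟨0, fun _ => x, Fin.elim0, monotone_const, rfl, by simp, fun i => i.elim0⟩
  | @insert A x y b _ hxy hby hbx ih =>
    obtain ⟨m, c, e, hc, rfl, rfl, he⟩ := ih
    refine ⟨m + 1, Fin.snoc c y, Fin.snoc e b, Fin.monotone_iff_le_succ.2 fun i => ?_,
      Fin.snoc_last _ _, (Fin.range_snoc e b).symm, fun i => ?_⟩
    · induction i using Fin.lastCases with
      | last => simpa using hxy
      | cast i =>
        rw [Fin.succ_castSucc, Fin.snoc_castSucc, Fin.snoc_castSucc]
        exact hc i.castSucc_le_succ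
    · induction i using Fin.lastCases with
      | last => simpa using ⟨hby, hbx⟩
      | cast i =>
        rw [Fin.succ_castSucc, Fin.snoc_castSucc, Fin.snoc_castSucc, Fin.snoc_castSucc]
        exact he i

end FinChain

section Lattice

variable {L : Type*} [Lattice L] [OrderBot L]

theorem isChainTransversal_singleton {b : L} (hb : b ≠ ⊥) : IsChainTransversal {b} b :=
  insert_empty_eq (β := Set L) b ▸
    (IsChainTransversal.empty ⊥).insert bot_le le_rfl fun h => hb (le_bot_iff.1 h)

theorem exists_isChainTransversal_pair {a b : L} (ha : a ≠ ⊥) (hb : b ≠ ⊥) (hab : a ≠ b) :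
    ∃ y, IsChainTransversal {a, b} y := by
  wlog h : ¬a ≤ b generalizing a b
  · rw [Set.pair_comm]
    exact this hb ha hab.symm fun h' => hab (le_antisymm (not_not.1 h) h')
  exact ⟨_, (isChainTransversal_singleton hb).insert le_sup_left le_sup_right h⟩

theorem mem_TLat_iff {A : Set L} :
    A ∈ TLat L ↔ (∃ x, IsChainTransversal A x) ∧ ∀ a ∈ A, IsAtom a := by
  constructor
  · rintro ⟨m, c, e, hc, -, rfl, he⟩
    refine ⟨⟨_, isChainTransversal_range hc.monotone fun i =>
      ⟨(he i).1.2, fun h => (he i).2 ⟨(he i).1.1, h⟩⟩⟩, ?_⟩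
    rintro _ ⟨i, rfl⟩
    exact (he i).1.1
  · rintro ⟨⟨x, hx⟩, hat⟩
    obtain ⟨m, c, e, hc, -, rfl, he⟩ := hx.exists_fin
    exact ⟨m, c, e, strictMono_of_transversal hc he, injective_of_transversal hc he, rfl,
      fun i => ⟨⟨hat _ ⟨i, rfl⟩, (he i).1⟩, fun h => (he i).2 h.2⟩⟩

end Lattice

section Complex

variable {α : Type*} {V : Set α} {H : Set (Set α)}

theorem IsCpx.empty_mem (h : IsCpx V H) : ∅ ∈ H :=
  let ⟨X, hX⟩ := h.2.2.1
  h.2.2.2.2 X hX ∅ (Set.empty_subset X)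

theorem isCFlat_inter_sInter {S : Set (Set α)} (hS : ∀ F ∈ S, IsCFlat V H F) :
    IsCFlat V H (V ∩ ⋂₀ S) := by
  refine ⟨Set.inter_subset_left, fun I hI hIS p hp => ?_⟩
  obtain ⟨F, hFS, hpF⟩ : ∃ F ∈ S, p ∉ F := by
    by_contra! h
    exact hp.2 ⟨hp.1, Set.mem_sInter.2 h⟩
  exact (hS F hFS).2 I hI (hIS.trans (Set.inter_subset_right.trans (Set.sInter_subset_of_mem hFS)))
    p ⟨hp.1, hpF⟩

end Complex

section FlatClosure

variable {L : Type*} [PartialOrder L] {α : Type*} {V : Set α} {H : Set (Set α)}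
  (φ : L ≃o {F : Set α // IsCFlat V H F})

def flatCl (v : α) : L :=
  φ.symm ⟨V ∩ ⋂₀ {F | IsCFlat V H F ∧ v ∈ F}, isCFlat_inter_sInter fun _ hF => hF.1⟩

variable {φ}

theorem flatCl_le_iff {v : α} (hv : v ∈ V) {x : L} : flatCl φ v ≤ x ↔ v ∈ (φ x).1 := by
  rw [flatCl, OrderIso.symm_apply_le, ← Subtype.coe_le_coe]
  exact ⟨fun h => h ⟨hv, Set.mem_sInter.2 fun _ hF => hF.2⟩,
    fun h => Set.inter_subset_right.trans (Set.sInter_subset_of_mem ⟨(φ x).2, h⟩)⟩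

variable (φ) in
theorem exists_flatCl_eq_of_isAtom [OrderBot L] {a : L} (ha : IsAtom a) :
    ∃ q ∈ V, flatCl φ q = a := by
  have hlt : (φ ⊥).1 ⊂ (φ a).1 := Subtype.coe_lt_coe.2 (φ.strictMono ha.bot_lt)
  obtain ⟨q, hqa, hqbot⟩ := Set.exists_of_ssubset hlt
  have hqV : q ∈ V := (φ a).2.1 hqa
  refine ⟨q, hqV, (ha.le_iff.1 ((flatCl_le_iff hqV).2 hqa)).resolve_left fun h => ?_⟩
  exact hqbot ((flatCl_le_iff hqV).1 h.le)

variable (φ)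

theorem mem_of_isChainTransversal (hH : ∅ ∈ H) {A : Set L} {x : L}
    (hA : IsChainTransversal A x) {X : Set α} (hXV : X ⊆ V) (hinj : Set.InjOn (flatCl φ) X)
    (hX : flatCl φ '' X = A) : X ∈ H := by
  induction hA generalizing X with
  | empty => exact Set.image_eq_empty.1 hX ▸ hH
  | @insert A x y b hA _ _ hbx ih =>
    obtain ⟨p, hpX, rfl⟩ : b ∈ flatCl φ '' X := hX ▸ Set.mem_insert b A
    have hpA : flatCl φ p ∉ A := fun h => hbx (hA.le h)
    have hX' : flatCl φ '' (X \ {p}) = A := by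
      rw [hinj.image_sdiff, Set.inter_singleton_of_mem hpX, Set.image_singleton, hX,
        Set.insert_sdiff_self_of_notMem hpA]
    have hX'x : X \ {p} ⊆ (φ x).1 := fun w hw =>
      (flatCl_le_iff (hXV hw.1)).1 (hA.le (hX' ▸ Set.mem_image_of_mem _ hw))
    have hpx : p ∉ (φ x).1 := fun h => hbx ((flatCl_le_iff (hXV hpX)).2 h)
    have := (φ x).2.2 _ (ih (Set.sdiff_subset.trans hXV) (hinj.mono Set.sdiff_subset) hX') hX'x p
      ⟨hXV hpX, hpx⟩
    rwa [Set.insert_sdiff_singleton, Set.insert_eq_of_mem hpX] at this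

theorem isChainTransversal_of_mem (hB : BoolRep V H) {X : Set α} (hX : X ∈ H) :
    Set.InjOn (flatCl φ) X ∧ ∃ x, IsChainTransversal (flatCl φ '' X) x := by
  obtain ⟨k, F, y, hF, hFm, -, rfl, hy⟩ := hB X hX
  let c : Fin (k + 1) → L := fun i => φ.symm ⟨F i, hF i⟩
  have hc : Monotone c := fun i j hij => φ.symm.monotone (Subtype.mk_le_mk.2 (hFm.monotone hij))
  have hle : ∀ i j, flatCl φ (y i) ≤ c j ↔ y i ∈ F j := fun i j => by
    rw [flatCl_le_iff ((hF _).1 (hy i).1), φ.apply_symm_apply]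
  have hcy : ∀ i, flatCl φ (y i) ≤ c i.succ ∧ ¬flatCl φ (y i) ≤ c i.castSucc := fun i =>
    ⟨(hle _ _).2 (hy i).1, fun h => (hy i).2 ((hle _ _).1 h)⟩
  refine ⟨Function.Injective.injOn_range (g := flatCl φ) (injective_of_transversal hc hcy),
    c (Fin.last k), ?_⟩
  rw [← Set.range_comp]
  exact isChainTransversal_range hc hcy

theorem mem_iff_isChainTransversal (hH : ∅ ∈ H) (hB : BoolRep V H) {X : Set α} (hXV : X ⊆ V) :
    X ∈ H ↔ Set.InjOn (flatCl φ) X ∧ ∃ x, IsChainTransversal (flatCl φ '' X) x :=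
  ⟨isChainTransversal_of_mem φ hB, fun ⟨hinj, _, hX⟩ =>
    mem_of_isChainTransversal φ hH hX hXV hinj rfl⟩

end FlatClosure

section Forward

variable {L : Type*} [Lattice L] [OrderBot L] {α : Type*} {V : Set α} {H : Set (Set α)}
  (φ : L ≃o {F : Set α // IsCFlat V H F})

theorem exists_flatCl_le_iff_mem (hH : ∅ ∈ H) (hB : BoolRep V H) {S : Set L}
    (hS : ∀ A x, IsChainTransversal A x → A ⊆ S → ∀ p ∈ V, flatCl φ p ∉ insert ⊥ S →
      ∃ y, IsChainTransversal (insert (flatCl φ p) A) y) :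
    ∃ x₀ : L, ∀ w ∈ V, flatCl φ w ≤ x₀ ↔ flatCl φ w ∈ insert ⊥ S := by
  have hG : IsCFlat V H {w ∈ V | flatCl φ w ∈ insert ⊥ S} := by
    refine ⟨Set.sep_subset _ _, fun I hI hIS p ⟨hpV, hpS⟩ => ?_⟩
    have hIV : I ⊆ V := fun w hw => (hIS hw).1
    have hpS' : flatCl φ p ∉ insert ⊥ S := fun h => hpS ⟨hpV, h⟩
    obtain ⟨hinj, x, hx⟩ := (mem_iff_isChainTransversal φ hH hB hIV).1 hI
    have hIS' : flatCl φ '' I ⊆ S := by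
      rintro _ ⟨w, hw, rfl⟩
      exact (hIS hw).2.resolve_left (hx.ne_bot ⟨w, hw, rfl⟩)
    rw [mem_iff_isChainTransversal φ hH hB (Set.insert_subset hpV hIV),
      Set.injOn_insert fun h => hpS (hIS h), Set.image_insert_eq]
    exact ⟨⟨hinj, fun h => hpS' (Or.inr (hIS' h))⟩, hS _ _ hx hIS' p hpV hpS'⟩
  refine ⟨φ.symm ⟨_, hG⟩, fun w hw => ?_⟩
  rw [flatCl_le_iff hw, φ.apply_symm_apply]
  exact ⟨fun h => h.2, fun h => ⟨hw, h⟩⟩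

variable [IsAtomistic L]

theorem isAtom_flatCl (hH : ∅ ∈ H) (hB : BoolRep V H) {v : α} (hv : v ∈ V)
    (hv₀ : flatCl φ v ≠ ⊥) : IsAtom (flatCl φ v) := by
  obtain ⟨x₀, hx₀⟩ := exists_flatCl_le_iff_mem φ hH hB (S := {flatCl φ v}) <| by
    rintro A x - hA p - hp
    simp only [Set.mem_insert_iff, Set.mem_singleton_iff, not_or] at hp
    rcases Set.subset_singleton_iff_eq.1 hA with rfl | rfl
    · exact ⟨_, insert_empty_eq (β := Set L) (flatCl φ p) ▸ isChainTransversal_singleton hp.1⟩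
    · exact exists_isChainTransversal_pair hp.1 hv₀ hp.2
  obtain ⟨a, ha, hav⟩ := (eq_bot_or_exists_atom_le (flatCl φ v)).resolve_left hv₀
  obtain ⟨q, hq, rfl⟩ := exists_flatCl_eq_of_isAtom φ ha
  rcases (hx₀ q hq).1 (hav.trans ((hx₀ v hv).2 (Or.inr rfl))) with h | h
  exacts [absurd h ha.1, h ▸ ha]

theorem exists_eq_latxi (φ : L ≃o {F : Set α // IsCFlat V H F}) (hH : ∅ ∈ H) (hB : BoolRep V H)
    {F : Set L} (hF : IsCFlat {a : L | IsAtom a} (TLat L) F) : ∃ x, F = latxi L x := by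
  obtain ⟨x₀, hx₀⟩ := exists_flatCl_le_iff_mem φ hH hB (S := F) <| by
    rintro A x hA hAF p hp hpF
    have hpat : IsAtom (flatCl φ p) := isAtom_flatCl φ hH hB hp fun h => hpF (Or.inl h)
    have hAT : A ∈ TLat L := mem_TLat_iff.2 ⟨⟨x, hA⟩, fun a ha => hF.1 (hAF ha)⟩
    exact (mem_TLat_iff.1 (hF.2 A hAT hAF _ ⟨hpat, fun h => hpF (Or.inr h)⟩)).1
  refine ⟨x₀, Set.ext fun a => ⟨fun ha => ?_, fun ⟨ha, hax⟩ => ?_⟩⟩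
  · have hat : IsAtom a := hF.1 ha
    obtain ⟨q, hq, rfl⟩ := exists_flatCl_eq_of_isAtom φ hat
    exact ⟨hat, (hx₀ q hq).2 (Or.inr ha)⟩
  · obtain ⟨q, hq, rfl⟩ := exists_flatCl_eq_of_isAtom φ ha
    exact ((hx₀ q hq).1 hax).resolve_left ha.1

end Forward

theorem AtomisticLat.isAtomistic {L : Type*} [Lattice L] [OrderBot L] (hA : AtomisticLat L) :
    IsAtomistic L :=
  ⟨fun b => let ⟨s, hs, hb⟩ := hA b; ⟨s, hb ▸ Finset.isLUB_sup_id, hs⟩⟩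

section Backward

variable {L : Type*} [Lattice L] [OrderBot L]

theorem latxi_subset_latxi_iff [IsAtomistic L] {x y : L} : latxi L x ⊆ latxi L y ↔ x ≤ y :=
  ⟨fun h => le_iff_atom_le_imp.2 fun _ ha hax => (h ⟨ha, hax⟩).2,
    fun h _ ha => ⟨ha.1, ha.2.trans h⟩⟩

theorem strictMono_latxi [IsAtomistic L] : StrictMono (latxi L) :=
  (OrderEmbedding.ofMapLEIff (latxi L) fun _ _ => latxi_subset_latxi_iff).strictMono

theorem isCFlat_latxi (x : L) : IsCFlat {a : L | IsAtom a} (TLat L) (latxi L x) := by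
  refine ⟨fun _ ha => ha.1, fun A hA hAx p ⟨hp, hpx⟩ => ?_⟩
  obtain ⟨⟨y, hy⟩, hat⟩ := mem_TLat_iff.1 hA
  have hAx' : IsChainTransversal A x :=
    (hy.inf_right fun a ha => (hAx ha).2).mono_right inf_le_right
  refine mem_TLat_iff.2 ⟨⟨_, hAx'.insert le_sup_left le_sup_right fun h => hpx ⟨hp, h⟩⟩, ?_⟩
  rintro a (rfl | ha)
  exacts [hp, hat a ha]

theorem isCpx_TLat [Finite L] (h : ∃ a : L, IsAtom a) : IsCpx {a : L | IsAtom a} (TLat L) := by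
  refine ⟨Set.toFinite _, h, ⟨∅, mem_TLat_iff.2 ⟨⟨⊥, .empty ⊥⟩, fun _ h => h.elim⟩⟩,
    fun X hX _ ha => (mem_TLat_iff.1 hX).2 _ ha, fun X hX Y hYX => ?_⟩
  obtain ⟨⟨x, hx⟩, hat⟩ := mem_TLat_iff.1 hX
  exact mem_TLat_iff.2 ⟨⟨x, hx.subset hYX⟩, fun a ha => hat a (hYX ha)⟩

theorem boolRep_TLat [IsAtomistic L] : BoolRep {a : L | IsAtom a} (TLat L) := by
  rintro X ⟨m, c, e, hc, he, rfl, hce⟩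
  exact ⟨m, fun i => latxi L (c i), e, fun i => isCFlat_latxi _, strictMono_latxi.comp hc, he,
    rfl, hce⟩

theorem nonempty_orderIso_flats_TLat [IsAtomistic L]
    (h : ∀ F, IsCFlat {a : L | IsAtom a} (TLat L) F → ∃ x, F = latxi L x) :
    Nonempty (L ≃o {F : Set L // IsCFlat {a : L | IsAtom a} (TLat L) F}) :=
  ⟨.ofSurjective (.ofMapLEIff (fun x => ⟨latxi L x, isCFlat_latxi x⟩) fun _ _ =>
      Subtype.mk_le_mk.trans latxi_subset_latxi_iff)
    fun ⟨F, hF⟩ => let ⟨x, hx⟩ := h F hF; ⟨x, Subtype.ext hx.symm⟩⟩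

theorem subsingleton_of_forall_not_isAtom [IsAtomic L] (h : ∀ a : L, ¬IsAtom a) :
    Subsingleton L :=
  have hbot : ∀ x : L, x = ⊥ := fun x =>
    (eq_bot_or_exists_atom_le x).resolve_right fun ⟨a, ha, _⟩ => h a ha
  ⟨fun x y => (hbot x).trans (hbot y).symm⟩

end Backward

theorem exists_boolRep_of_subsingleton {L : Type*} [Preorder L] [Nonempty L] [Subsingleton L] :
    ∃ (V : Set L) (H : Set (Set L)), IsCpx V H ∧ BoolRep V H ∧
      Nonempty (L ≃o {F : Set L // IsCFlat V H F}) := by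
  have huniv : IsCFlat (Set.univ : Set L) {∅} Set.univ :=
    ⟨subset_rfl, fun _ _ _ p hp => absurd (Set.mem_univ p) hp.2⟩
  have hflat : ∀ F, IsCFlat (Set.univ : Set L) {∅} F → F = Set.univ := fun F hF =>
    Set.eq_univ_of_forall fun p => by_contra fun hp =>
      (Set.insert_nonempty p ∅).ne_empty (hF.2 ∅ rfl (Set.empty_subset F) p ⟨Set.mem_univ p, hp⟩)
  have hC : IsCpx (Set.univ : Set L) {∅} :=
    ⟨Set.toFinite _, Set.univ_nonempty, Set.singleton_nonempty _,
      fun X hX => hX ▸ Set.empty_subset _, fun X hX Y hYX => Set.subset_empty_iff.1 (hX ▸ hYX)⟩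
  have hB : BoolRep (Set.univ : Set L) {∅} := fun X hX =>
    ⟨0, fun _ => Set.univ, Fin.elim0, fun _ => huniv, Subsingleton.strictMono (α := Fin 1) _,
      fun i => i.elim0, hX ▸ (Set.range_eq_empty _).symm, fun i => i.elim0⟩
  let : Unique L := uniqueOfSubsingleton (Classical.arbitrary L)
  let : Unique {F : Set L // IsCFlat Set.univ {∅} F} :=
    { default := ⟨Set.univ, huniv⟩, uniq := fun F => Subtype.ext (hflat F.1 F.2) }
  exact ⟨Set.univ, {∅}, hC, hB, ⟨OrderIso.ofUnique _ _⟩⟩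

/-- A finite atomistic lattice `L` is isomorphic to the lattice of flats of some
boolean representable finite simplicial complex if and only if `L` is isomorphic
to the lattice of flats of `𝒯_L = (At(L), T_L)`. -/
theorem stmt12 (L : Type u) [Lattice L] [Fintype L] [OrderBot L]
    (hA : AtomisticLat L) :
    (∃ (α : Type u) (V : Set α) (H : Set (Set α)), IsCpx V H ∧ BoolRep V H ∧
        Nonempty (L ≃o {F : Set α // IsCFlat V H F})) ↔
    Nonempty (L ≃o {F : Set L // IsCFlat {a : L | IsAtom a} (TLat L) F}) := by
  have := hA.isAtomistic
  constructor
  · rintro ⟨α, V, H, hC, hB, ⟨φ⟩⟩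
    exact nonempty_orderIso_flats_TLat fun F hF => exists_eq_latxi φ hC.empty_mem hB hF
  · rintro ⟨ψ⟩
    by_cases hat : ∃ a : L, IsAtom a
    · exact ⟨L, _, _, isCpx_TLat hat, boolRep_TLat, ⟨ψ⟩⟩
    · have := subsingleton_of_forall_not_isAtom (not_exists.1 hat)
      exact ⟨L, exists_boolRep_of_subsingleton⟩
end
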